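/- For every n-expression u of length ℓ, area(u) ≤ (n-1)ℓ, and for a normal expression u = s_{1,f(1)} ... s_{n,f(n)} the n-th strand in the braid diagram of u crosses in front only during the final block s_{n,f(n)}; consequently any two strands cross at most once in the diagram of a normal expression. -/

import Mathlib

open scoped Classical

noncomputable section

/-- adjacent transposition `s i = (i, i+1)` acting on ℕ (1-indexed positions) -/
def s (i : ℕ) : Equiv.Perm ℕ := Equiv.swap i (i + 1)

/-- permutation represented by a word; letters are applied left to right
(`wperm (u ++ v) = wperm v * wperm u`, i.e. `u` first, then `v`). -/
def wperm (w : List ℕ) : Equiv.Perm ℕ := ((w.map s).reverse).prod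

/-- `w` is an `n`-expression: a word in the letters `s 1, ..., s (n-1)` -/
def IsExpr (n : ℕ) (w : List ℕ) : Prop := ∀ i ∈ w, 1 ≤ i ∧ i + 1 ≤ n

/-- set of inversions of a permutation of `{1,...,n}` -/
def invSet (n : ℕ) (π : Equiv.Perm ℕ) : Finset (ℕ × ℕ) :=
  (Finset.Icc 1 n ×ˢ Finset.Icc 1 n).filter (fun pq => pq.1 < pq.2 ∧ π pq.2 < π pq.1)

/-- a reduced `n`-expression: its length equals the inversion number of the
permutation it represents -/
def ReducedExpr (n : ℕ) (w : List ℕ) : Prop :=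
  IsExpr n w ∧ w.length = (invSet n (wperm w)).card

/-- one application of a braid relation `s i s j s i = s j s i s j`, `|i-j| = 1` -/
inductive StepI : List ℕ → List ℕ → Prop
  | mk (a b : List ℕ) (i j : ℕ) (h : i + 1 = j ∨ j + 1 = i) :
      StepI (a ++ i :: j :: i :: b) (a ++ j :: i :: j :: b)

/-- one application of a commutation relation `s i s j = s j s i`, `|i-j| ≥ 2` -/
inductive StepII : List ℕ → List ℕ → Prop
  | mk (a b : List ℕ) (i j : ℕ) (h : i + 2 ≤ j ∨ j + 2 ≤ i) :
      StepII (a ++ i :: j :: b) (a ++ j :: i :: b)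

def BraidStep (u v : List ℕ) : Prop := StepI u v ∨ StepII u v

/-- `c` is a derivation from `u` to `v` by braid relations -/
def IsDeriv (u v : List ℕ) (c : List (List ℕ)) : Prop :=
  c.Chain' BraidStep ∧ c.head? = some u ∧ c.getLast? = some v

/-- combinatorial distance: minimal number of braid relations transforming `u` into `v` -/
def dist (u v : List ℕ) : ℕ :=
  sInf {k | ∃ c, IsDeriv u v c ∧ c.length = k + 1}

/-- the word `s_{j,i} = s_{j-1} s_{j-2} ... s_i` (empty if `j ≤ i`) -/
def sji (j i : ℕ) : List ℕ := (List.range (j - i)).map (fun k => j - 1 - k)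

/-- the normal word `s_{1,f(1)} s_{2,f(2)} ... s_{n,f(n)}` -/
def normalWord (n : ℕ) (f : ℕ → ℕ) : List ℕ :=
  ((List.range n).map (fun k => sji (k + 1) (f (k + 1)))).flatten

/-- `f : {1,...,n} → {1,...,n}` with `1 ≤ f i ≤ i` for all `i` -/
def IsNormalFun (n : ℕ) (f : ℕ → ℕ) : Prop := ∀ i ∈ Finset.Icc 1 n, 1 ≤ f i ∧ f i ≤ i

/-- names of the successive crossings: the name of a letter is the pair of starting
positions of the two strands crossing there -/
def namesAux : Equiv.Perm ℕ → List ℕ → List (Finset ℕ)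
  | _, [] => []
  | π, i :: rest => ({π⁻¹ i, π⁻¹ (i + 1)} : Finset ℕ) :: namesAux (s i * π) rest

/-- the name sequence `S(w)` of a word -/
def names (w : List ℕ) : List (Finset ℕ) := namesAux 1 w

/-- two entries occur in the same relative order in `S` and `S'` -/
def sameOrder (S S' : List (Finset ℕ)) (a b : Finset ℕ) : Prop :=
  (S.idxOf a < S.idxOf b) ↔ (S'.idxOf a < S'.idxOf b)

/-- `I₃(S,S')`: number of triples `{p,q,r} ⊆ {1,...,n}` such that the relative order of
the three pairs `{p,q}, {p,r}, {q,r}` is not the same in `S` and `S'` -/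
def I3 (n : ℕ) (S S' : List (Finset ℕ)) : ℕ :=
  (((Finset.Icc 1 n).powersetCard 3).filter (fun t =>
    ¬ ∀ a ∈ t.powersetCard 2, ∀ b ∈ t.powersetCard 2, sameOrder S S' a b)).card

/-- `I₂,₂(S,S')`: number of unordered pairs of disjoint pairs in `{1,...,n}` whose
relative order is not the same in `S` and `S'` -/
def I22 (n : ℕ) (S S' : List (Finset ℕ)) : ℕ :=
  ((((Finset.Icc 1 n).powersetCard 2).powersetCard 2).filter (fun P =>
    (∀ a ∈ P, ∀ b ∈ P, a ≠ b → Disjoint a b) ∧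
    ¬ ∀ a ∈ P, ∀ b ∈ P, sameOrder S S' a b)).card

/-- total number of unordered pairs of entries whose relative order differs -/
def InvCount (S S' : List (Finset ℕ)) : ℕ :=
  ((S.toFinset.powersetCard 2).filter (fun P =>
    ¬ ∀ a ∈ P, ∀ b ∈ P, sameOrder S S' a b)).card

/-- number of type I steps in a derivation -/
def countStepsI (c : List (List ℕ)) : ℕ :=
  ((Finset.range (c.length - 1)).filter (fun k => StepI (c.getD k []) (c.getD (k + 1) []))).card

/-- number of type II steps in a derivation -/
def countStepsII (c : List (List ℕ)) : ℕ :=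
  ((Finset.range (c.length - 1)).filter (fun k => StepII (c.getD k []) (c.getD (k + 1) []))).card

/-- position of the strand starting at position `p` after the first `k` letters of `w` -/
def strandPos (w : List ℕ) (p k : ℕ) : ℕ := wperm (w.take k) p

/-- number of unit squares to the right of the `n`-th strand in the braid diagram of `w`,
drawn on an `(n-1) × length w` grid -/
def area (n : ℕ) (w : List ℕ) : ℕ :=
  ((List.range w.length).map (fun k => n - max (strandPos w n k) (strandPos w n (k + 1)))).sum

/-- `u_n = s_{1,1} s_{2,1} ... s_{n,1}` -/
def uWord (n : ℕ) : List ℕ := ((List.range n).map (fun k => sji (k + 1) 1)).flatten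

/-- `v_n = s_{n,1} s_{n,2} ... s_{n,n-1}` -/
def vWord (n : ℕ) : List ℕ := ((List.range (n - 1)).map (fun k => sji n (k + 1))).flatten

/-! A word in `s 1, …, s (n-1)` fixes position `0`, so every strand stays at a position `≥ 1` and
each column of the diagram contributes at most `n - 1` squares. No letter of
`s_{1,f(1)} ⋯ s_{m,f(m)}` touches a position `> m`, so the strand starting at `m + 1` stays put
until the block `s_{m+1,f(m+1)}`, where it crosses the strands `π⁻¹ a` for the distinct letters
`a ≤ m` of the block (`π` the permutation of the earlier blocks). These start at positions `≤ m`,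
so the names `{π⁻¹ a, m + 1}` are pairwise distinct and new, and by induction no name repeats. -/

lemma s_inv (i : ℕ) : (s i)⁻¹ = s i := Equiv.swap_inv _ _

lemma s_apply_of_ne {i a : ℕ} (h₁ : a ≠ i) (h₂ : a ≠ i + 1) : s i a = a :=
  Equiv.swap_apply_of_ne_of_ne h₁ h₂

lemma wperm_cons (i : ℕ) (w : List ℕ) : wperm (i :: w) = wperm w * s i := by
  simp [wperm]

lemma wperm_apply_of_forall_ne {w : List ℕ} {p : ℕ} (h : ∀ a ∈ w, a ≠ p ∧ a + 1 ≠ p) :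
    wperm w p = p := by
  induction w with
  | nil => rfl
  | cons i w ih =>
    obtain ⟨hi, hi'⟩ := h i List.mem_cons_self
    rw [wperm_cons, Equiv.Perm.mul_apply, s_apply_of_ne (Ne.symm hi) (Ne.symm hi')]
    exact ih fun a ha => h a (List.mem_cons_of_mem _ ha)

lemma wperm_inv_apply_of_forall_ne {w : List ℕ} {p : ℕ} (h : ∀ a ∈ w, a ≠ p ∧ a + 1 ≠ p) :
    (wperm w)⁻¹ p = p :=
  Equiv.Perm.inv_eq_iff_eq.mpr (wperm_apply_of_forall_ne h).symm

lemma one_le_strandPos {n : ℕ} {u : List ℕ} (hu : IsExpr n u) {p : ℕ} (hp : 1 ≤ p) (k : ℕ) :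
    1 ≤ strandPos u p k := by
  have hzero : wperm (u.take k) 0 = 0 :=
    wperm_apply_of_forall_ne fun a ha => by
      have := (hu a (List.mem_of_mem_take ha)).1
      omega
  by_contra! hlt
  have : p = 0 := (wperm (u.take k)).injective ((Nat.lt_one_iff.mp hlt).trans hzero.symm)
  omega

theorem area_le {n : ℕ} {u : List ℕ} (hu : IsExpr n u) : area n u ≤ (n - 1) * u.length := by
  rcases Nat.eq_zero_or_pos n with rfl | hn
  · simp [area]
  have hcol : ∀ x ∈ (List.range u.length).map
      (fun k => n - max (strandPos u n k) (strandPos u n (k + 1))), x ≤ n - 1 := by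
    simp only [List.mem_map, List.mem_range]
    rintro _ ⟨k, -, rfl⟩
    have := one_le_strandPos hu hn k
    have := le_max_left (strandPos u n k) (strandPos u n (k + 1))
    omega
  calc area n u ≤ u.length • (n - 1) := by
        simpa [area] using List.sum_le_card_nsmul _ _ hcol
    _ = (n - 1) * u.length := by rw [smul_eq_mul, mul_comm]

lemma lt_of_mem_sji {a j i : ℕ} (h : a ∈ sji j i) : a < j := by
  simp only [sji, List.mem_map, List.mem_range] at h
  obtain ⟨k, hk, rfl⟩ := h
  omega

lemma length_sji (j i : ℕ) : (sji j i).length = j - i := by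
  simp [sji]

lemma sji_of_le {j i : ℕ} (h : j ≤ i) : sji j i = [] := by
  simp [sji, Nat.sub_eq_zero_of_le h]

lemma sji_succ {j i : ℕ} (h : i ≤ j) : sji (j + 1) i = j :: sji j i := by
  rw [sji, Nat.succ_sub h, List.range_succ_eq_map, List.map_cons, List.map_map, sji]
  congr 1
  exact List.map_congr_left fun a _ => by simp only [Function.comp]; omega

lemma nodup_sji (j i : ℕ) : (sji j i).Nodup :=
  List.nodup_range.map_on fun x hx y hy hxy => by
    simp only [List.mem_range] at hx hy
    omega

lemma normalWord_zero (f : ℕ → ℕ) : normalWord 0 f = [] := rfl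

lemma normalWord_succ (m : ℕ) (f : ℕ → ℕ) :
    normalWord (m + 1) f = normalWord m f ++ sji (m + 1) (f (m + 1)) := by
  simp [normalWord, List.range_succ]

lemma lt_of_mem_normalWord {n : ℕ} {f : ℕ → ℕ} {a : ℕ} (h : a ∈ normalWord n f) :
    a < n := by
  simp only [normalWord, List.mem_flatten, List.mem_map, List.mem_range] at h
  obtain ⟨_, ⟨k, hk, rfl⟩, ha⟩ := h
  have := lt_of_mem_sji ha
  omega

lemma ne_of_mem_normalWord {m : ℕ} {f : ℕ → ℕ} {p : ℕ} (hp : m < p) :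
    ∀ a ∈ normalWord m f, a ≠ p ∧ a + 1 ≠ p := fun a ha => by
  have := lt_of_mem_normalWord ha
  omega

theorem strandPos_normalWord_self {n : ℕ} {f : ℕ → ℕ} {k : ℕ}
    (hk : k ≤ (normalWord n f).length - (n - f n)) : strandPos (normalWord n f) n k = n := by
  cases n with
  | zero => simp [strandPos, normalWord_zero, wperm]
  | succ m =>
    have hk' : k ≤ (normalWord m f).length := by
      rw [normalWord_succ, List.length_append, length_sji] at hk
      omega
    rw [strandPos, normalWord_succ, List.take_append_of_le_length hk']
    exact wperm_apply_of_forall_ne fun a ha =>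
      ne_of_mem_normalWord (Nat.lt_succ_self m) a (List.mem_of_mem_take ha)

lemma wperm_normalWord_inv_apply_le {m : ℕ} {f : ℕ → ℕ} {a : ℕ} (ha : a ≤ m) :
    (wperm (normalWord m f))⁻¹ a ≤ m := by
  by_contra! hlt
  have hfix := wperm_apply_of_forall_ne (ne_of_mem_normalWord (f := f) hlt)
  rw [← Equiv.Perm.mul_apply, mul_inv_cancel, Equiv.Perm.one_apply] at hfix
  omega

lemma namesAux_append (π : Equiv.Perm ℕ) (u v : List ℕ) :
    namesAux π (u ++ v) = namesAux π u ++ namesAux (wperm u * π) v := by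
  induction u generalizing π with
  | nil => simp [namesAux, wperm]
  | cons i u ih => simp only [List.cons_append, namesAux, ih, wperm_cons, mul_assoc]

lemma s_mul_inv_apply (i : ℕ) (π : Equiv.Perm ℕ) (x : ℕ) : (s i * π)⁻¹ x = π⁻¹ (s i x) := by
  rw [mul_inv_rev, s_inv, Equiv.Perm.mul_apply]

lemma namesAux_sji (π : Equiv.Perm ℕ) (j i : ℕ) :
    namesAux π (sji j i) = (sji j i).map fun a => ({π⁻¹ a, π⁻¹ j} : Finset ℕ) := by
  induction j generalizing π with
  | zero => simp [sji, namesAux]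
  | succ j ih =>
    rcases Nat.lt_or_ge j i with hji | hij
    · simp [sji_of_le (Nat.succ_le_of_lt hji), namesAux]
    rw [sji_succ hij, namesAux, ih, List.map_cons]
    congr 1
    refine List.map_congr_left fun a ha => ?_
    have := lt_of_mem_sji ha
    rw [s_mul_inv_apply, s_mul_inv_apply, s_apply_of_ne (by omega) (by omega), s, Equiv.swap_apply_left]

lemma names_normalWord_succ (m : ℕ) (f : ℕ → ℕ) :
    names (normalWord (m + 1) f) = names (normalWord m f) ++
      (sji (m + 1) (f (m + 1))).map
        fun a => ({(wperm (normalWord m f))⁻¹ a, m + 1} : Finset ℕ) := by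
  rw [names, normalWord_succ, namesAux_append, mul_one, namesAux_sji,
    wperm_inv_apply_of_forall_ne (ne_of_mem_normalWord (Nat.lt_succ_self m))]
  rfl

lemma le_of_mem_names_normalWord {m : ℕ} {f : ℕ → ℕ} {N : Finset ℕ}
    (hN : N ∈ names (normalWord m f)) {x : ℕ} (hx : x ∈ N) : x ≤ m := by
  induction m generalizing N with
  | zero => simp [names, normalWord_zero, namesAux] at hN
  | succ m ih =>
    rw [names_normalWord_succ, List.mem_append, List.mem_map] at hN
    rcases hN with hN | ⟨a, ha, rfl⟩
    · exact (ih hN hx).trans (Nat.le_succ m)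
    have := wperm_normalWord_inv_apply_le (f := f) (Nat.le_of_lt_succ (lt_of_mem_sji ha))
    simp only [Finset.mem_insert, Finset.mem_singleton] at hx
    omega

theorem nodup_names_normalWord (m : ℕ) (f : ℕ → ℕ) : (names (normalWord m f)).Nodup := by
  induction m with
  | zero => simp [names, normalWord_zero, namesAux]
  | succ m ih =>
    set π := wperm (normalWord m f)
    have hlt : ∀ a ∈ sji (m + 1) (f (m + 1)), π⁻¹ a < m + 1 := fun a ha =>
      Nat.lt_succ_of_le (wperm_normalWord_inv_apply_le (Nat.le_of_lt_succ (lt_of_mem_sji ha)))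
    rw [names_normalWord_succ, List.nodup_append]
    refine ⟨ih, (nodup_sji _ _).map_on fun a ha b hb hab => π⁻¹.injective ?_, ?_⟩
    · have hmem : π⁻¹ a ∈ ({π⁻¹ b, m + 1} : Finset ℕ) := hab ▸ Finset.mem_insert_self _ _
      simp only [Finset.mem_insert, Finset.mem_singleton] at hmem
      have := hlt a ha
      omega
    · rintro N hN _ hN' rfl
      obtain ⟨a, -, rfl⟩ := List.mem_map.mp hN'
      exact Nat.not_succ_le_self m <| le_of_mem_names_normalWord hN <|
        Finset.mem_insert_of_mem (Finset.mem_singleton_self _)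

/-- `area(u) ≤ (n-1)·length(u)` for every `n`-expression; in the diagram of a normal
expression the `n`-th strand stays at position `n` until the final block `s_{n,f(n)}`,
and any two strands cross at most once. -/
theorem area_bound_and_normal_diagram (n : ℕ) :
    (∀ u : List ℕ, IsExpr n u → area n u ≤ (n - 1) * u.length) ∧
    ∀ f : ℕ → ℕ, IsNormalFun n f →
      (∀ k, k ≤ (normalWord n f).length - (n - f n) →
        strandPos (normalWord n f) n k = n) ∧
      (∀ a : Finset ℕ, (names (normalWord n f)).count a ≤ 1) :=
  ⟨fun _ hu => area_le hu, fun f _ =>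
    ⟨fun _ hk => strandPos_normalWord_self hk,
      List.nodup_iff_count_le_one.mp (nodup_names_normalWord n f)⟩⟩

end
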